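/- For all positive integers m, p, c, there exists a least integer k such that for every c-coloring of {1,...,k} there is a set H = {a₀ < a₁ < ... < a_{l-1}} ⊆ {1,...,k} such that ∑H (the set of all sums of nonempty subsets of H) is monochromatic, m ≤ a₀, p ≤ l, and a_{p-1} ≤ l. (This least k is denoted Sp(m,p,c).) -/

import Mathlib

open Finset

/-!
By Hindman's theorem a finite coloring of `ℕ` admits an infinite sequence, with all terms above
`m`, whose finite sums are monochromatic. Grouping it into consecutive blocks, each longer than the
sum of everything before it, makes the block sums strictly increasing while keeping their finite
sums among the old ones; the first `l` block sums, where `l` is the `p`-th one, then form `H`.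
Since `H` only sees the coloring on finitely many integers, compactness of the space of colorings
(Tychonoff) yields a single `k` that works for every coloring, hence a least one.
-/

/-- `SpProp m p c k`: every `c`-coloring of `{1,…,k}` admits
`H = {a₀ < … < a_{l-1}} ⊆ {1,…,k}` with all sums of nonempty subsets of `H`
monochromatic, `m ≤ a₀`, `p ≤ l` and `a_{p-1} ≤ l`. -/
def SpProp (m p c k : ℕ) : Prop :=
  ∀ chi : ℕ → Fin c,
    ∃ (l : ℕ) (a : Fin l → ℕ) (hpl : 0 < p ∧ p ≤ l),
      StrictMono a ∧
      (∀ i, 1 ≤ a i ∧ a i ≤ k) ∧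
      m ≤ a ⟨0, lt_of_lt_of_le hpl.1 hpl.2⟩ ∧
      a ⟨p - 1, lt_of_lt_of_le (Nat.pred_lt hpl.1.ne') hpl.2⟩ ≤ l ∧
      ∃ col : Fin c, ∀ I : Finset (Fin l), I.Nonempty → chi (∑ i ∈ I, a i) = col

theorem exists_forall_of_forall_exists_eqOn {ι α : Type*} [Finite α]
    (P : ℕ → (ι → α) → Prop) (hP : ∀ {k k'} χ, k ≤ k' → P k χ → P k' χ)
    (hloc : ∀ χ, ∃ k, ∃ s : Finset ι, ∀ χ', Set.EqOn χ' χ s → P k χ') :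
    ∃ k, ∀ χ, P k χ := by
  let _ : TopologicalSpace α := ⊥
  have : DiscreteTopology α := ⟨rfl⟩
  choose K s hKs using hloc
  have hopen (χ : ι → α) : IsOpen {χ' | Set.EqOn χ' χ (s χ)} := by
    simp only [Set.EqOn, Set.ofPred_forall]
    exact isOpen_biInter_finset fun i _ =>
      (isOpen_discrete {χ i}).preimage (continuous_apply (A := fun _ : ι => α) i)
  obtain ⟨t, ht⟩ := isCompact_univ.elim_finite_subcover _ hopen
    fun χ _ => Set.mem_iUnion.2 ⟨χ, Set.eqOn_refl _ _⟩
  refine ⟨t.sup K, fun χ => ?_⟩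
  obtain ⟨χ₀, hχ₀, hχ⟩ := Set.mem_iUnion₂.1 (ht (Set.mem_univ χ))
  exact hP χ (le_sup hχ₀) (hKs χ₀ χ hχ)

theorem Hindman.FS_subset_Ioi {M : Type*} [AddCommMonoid M] [PartialOrder M]
    [CanonicallyOrderedAdd M] {m : M} {a : Stream' M} (ha : ∀ i, m < a.get i) :
    FS a ⊆ Set.Ioi m := by
  intro x hx
  induction hx with
  | head' a => exact ha 0
  | tail' a x _ ih => exact ih fun i => ha (i + 1)
  | cons' a x _ _ => exact (ha 0).trans_le le_self_add

theorem exists_forall_sum_mem_of_finite_coloring {α : Type*} [Finite α] (chi : ℕ → α)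
    (m : ℕ) :
    ∃ v : α, ∃ b : ℕ → ℕ,
      ∀ I : Finset ℕ, I.Nonempty → m < ∑ i ∈ I, b i ∧ chi (∑ i ∈ I, b i) = v := by
  let a : Stream' ℕ := fun n => n + m + 1
  have ha : ∀ i, m < a.get i := fun i => Nat.lt_add_one_of_le (Nat.le_add_left m i)
  have hcov : Hindman.FS a ⊆ ⋃₀ Set.range fun v => {n | m < n ∧ chi n = v} := fun x hx =>
    ⟨_, ⟨chi x, rfl⟩, Hindman.FS_subset_Ioi ha hx, rfl⟩
  obtain ⟨_, ⟨v, rfl⟩, b, hb⟩ :=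
    Hindman.FS_partition_regular a _ (Set.finite_range _) hcov
  exact ⟨v, b, fun I hI => hb (Hindman.FS.finsetSum b I hI)⟩

section Blocks

variable (b : ℕ → ℕ)

/-- Block `j` of indices is `[blockStart b j, blockStart b (j + 1))`; its length exceeds the sum of
`b` over all earlier indices. -/
def blockStart : ℕ → ℕ
  | 0 => 0
  | j + 1 => blockStart j + (∑ i ∈ range (blockStart j), b i + 1)

def blockSum (j : ℕ) : ℕ := ∑ i ∈ Ico (blockStart b j) (blockStart b (j + 1)), b i

theorem blockStart_strictMono : StrictMono (blockStart b) :=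
  strictMono_nat_of_lt_succ fun j => by simp only [blockStart]; omega

theorem blockSum_strictMono (hb : ∀ i, 0 < b i) : StrictMono (blockSum b) := by
  refine strictMono_nat_of_lt_succ fun j => ?_
  have hle : blockSum b j ≤ ∑ i ∈ range (blockStart b (j + 1)), b i :=
    sum_le_sum_of_subset (range_eq_Ico _ ▸ Ico_subset_Ico (Nat.zero_le _) le_rfl)
  have hlen : ∑ i ∈ range (blockStart b (j + 1)), b i + 1 ≤ blockSum b (j + 1) := by
    calc ∑ i ∈ range (blockStart b (j + 1)), b i + 1
        = (Ico (blockStart b (j + 1)) (blockStart b (j + 1 + 1))).card := by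
          simp only [Nat.card_Ico, blockStart]; omega
      _ = ∑ i ∈ Ico (blockStart b (j + 1)) (blockStart b (j + 1 + 1)), 1 := by simp
      _ ≤ blockSum b (j + 1) := sum_le_sum fun i _ => hb i
  omega

theorem sum_blockSum (I : Finset ℕ) :
    ∑ j ∈ I, blockSum b j =
      ∑ i ∈ I.biUnion fun j => Ico (blockStart b j) (blockStart b (j + 1)), b i := by
  refine (sum_biUnion fun j _ k _ hjk => ?_).symm
  have := (blockStart_strictMono b).monotone.pairwise_disjoint_on_Ico_succ hjk
  simpa [Function.onFun, ← Finset.disjoint_coe] using this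

end Blocks

theorem exists_strictMono_forall_sum_eq_sum (b : ℕ → ℕ) (hb : ∀ i, 0 < b i) :
    ∃ c : ℕ → ℕ, StrictMono c ∧ ∀ I : Finset ℕ, I.Nonempty →
      ∃ J : Finset ℕ, J.Nonempty ∧ ∑ j ∈ I, c j = ∑ i ∈ J, b i := by
  refine ⟨blockSum b, blockSum_strictMono b hb, fun I ⟨j, hj⟩ => ⟨_, ?_, sum_blockSum b I⟩⟩
  exact ⟨blockStart b j, mem_biUnion.2
    ⟨j, hj, mem_Ico.2 ⟨le_rfl, blockStart_strictMono b (Nat.lt_succ_self j)⟩⟩⟩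

/-- `SpProp m p c k` unfolds to `∀ chi : ℕ → Fin c, HasSpSet m p k chi`. -/
def HasSpSet {α : Type*} (m p k : ℕ) (chi : ℕ → α) : Prop :=
  ∃ (l : ℕ) (a : Fin l → ℕ) (hpl : 0 < p ∧ p ≤ l),
    StrictMono a ∧
    (∀ i, 1 ≤ a i ∧ a i ≤ k) ∧
    m ≤ a ⟨0, lt_of_lt_of_le hpl.1 hpl.2⟩ ∧
    a ⟨p - 1, lt_of_lt_of_le (Nat.pred_lt hpl.1.ne') hpl.2⟩ ≤ l ∧
    ∃ col : α, ∀ I : Finset (Fin l), I.Nonempty → chi (∑ i ∈ I, a i) = col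

theorem HasSpSet.mono {α : Type*} {m p k k' : ℕ} {chi : ℕ → α} (h : HasSpSet m p k chi)
    (hk : k ≤ k') : HasSpSet m p k' chi := by
  obtain ⟨l, a, hpl, ha, hbd, h0, hp, col⟩ := h
  exact ⟨l, a, hpl, ha, fun i => ⟨(hbd i).1, (hbd i).2.trans hk⟩, h0, hp, col⟩

/-- `H` consists of the first `c (p - 1)` terms of `c`, so that `a_{p-1} = l`. -/
theorem hasSpSet_of_strictMono {α : Type*} {m p : ℕ} {c : ℕ → ℕ} (hc : StrictMono c)
    (hm : m < c 0) (hp : 0 < p) (chi : ℕ → α) (v : α)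
    (hcol : ∀ I ⊆ range (c (p - 1)), I.Nonempty → chi (∑ i ∈ I, c i) = v) :
    HasSpSet m p (c (c (p - 1) - 1)) chi := by
  have hpl : 0 < p ∧ p ≤ c (p - 1) := ⟨hp, by
    have := hc.add_le_nat (p - 1) 0
    rw [add_zero] at this
    omega⟩
  refine ⟨c (p - 1), fun i => c i, hpl, fun i j hij => hc hij,
    fun i => ⟨(Nat.zero_lt_of_lt hm).trans_le (hc.monotone (Nat.zero_le _)),
      hc.monotone (Nat.le_sub_one_of_lt i.2)⟩, hm.le, le_rfl, v, fun I hI => ?_⟩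
  change chi (∑ i ∈ I, c (Fin.valEmbedding i)) = v
  rw [← sum_map I Fin.valEmbedding c]
  exact hcol _ (fun i hi => by obtain ⟨j, -, rfl⟩ := mem_map.1 hi; simp) (hI.map)

theorem exists_hasSpSet_of_eqOn {α : Type*} [Finite α] (m : ℕ) {p : ℕ} (hp : 0 < p)
    (chi : ℕ → α) :
    ∃ k, ∃ s : Finset ℕ, ∀ chi', Set.EqOn chi' chi s → HasSpSet m p k chi' := by
  obtain ⟨v, b, hb⟩ := exists_forall_sum_mem_of_finite_coloring chi m
  obtain ⟨c, hc, hcb⟩ := exists_strictMono_forall_sum_eq_sum b fun i =>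
    Nat.zero_lt_of_lt (by simpa using (hb {i} (singleton_nonempty i)).1)
  have hsum (I : Finset ℕ) (hI : I.Nonempty) :
      m < ∑ i ∈ I, c i ∧ chi (∑ i ∈ I, c i) = v := by
    obtain ⟨J, hJ, hIJ⟩ := hcb I hI
    exact hIJ ▸ hb J hJ
  have hm : m < c 0 := by simpa using (hsum {0} (singleton_nonempty 0)).1
  refine ⟨_, Iic (∑ i ∈ range (c (p - 1)), c i), fun chi' hchi' =>
    hasSpSet_of_strictMono hc hm hp chi' v fun I hI hne => ?_⟩
  rw [hchi' (mem_Iic.2 (sum_le_sum_of_subset hI))]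
  exact (hsum I hne).2

theorem stmt_7_general (m p c : ℕ) (hp : 0 < p) :
    ∃ k, IsLeast {k | SpProp m p c k} k := by
  obtain ⟨k, hk⟩ := exists_forall_of_forall_exists_eqOn
    (fun k (chi : ℕ → Fin c) => HasSpSet m p k chi) (fun _ hkk h => h.mono hkk)
    (exists_hasSpSet_of_eqOn m hp)
  exact ⟨_, isLeast_csInf ⟨k, hk⟩⟩

theorem stmt_7 (m p c : ℕ) (hm : 0 < m) (hp : 0 < p) (hc : 0 < c) :
    ∃ k, IsLeast {k | SpProp m p c k} k :=
  stmt_7_general m p c hp
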